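/- arXiv:2012.06661 — 10 statements merged into one kernel-verified Lean document; each statement's English description precedes it below -/
import Mathlib

section
/- An element f of the incidence algebra I(X,K) commutes with the standard basis element e_{uv} (where u ≤ v) if and only if f(x,u) = 0 for all x < u, f(v,y) = 0 for all y > v, and f(u,u) = f(v,v). -/
set_option maxHeartbeats 1000000
set_option synthInstance.maxHeartbeats 400000

open Matrix

variable (K X : Type*) [Field K] [Fintype X] [PartialOrder X] [DecidableEq X]

/-- The incidence algebra of a finite poset `X` over `K`, realized as the subalgebra of
matrices `f` with `f x y = 0` whenever `¬ x ≤ y`. -/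
def IncAlg : Subalgebra K (Matrix X X K) where
  carrier := {f | ∀ x y : X, ¬ x ≤ y → f x y = 0}
  zero_mem' := fun _ _ _ => rfl
  add_mem' := fun {f g} hf hg x y h => by
    simp [Matrix.add_apply, hf x y h, hg x y h]
  one_mem' := fun x y h => Matrix.one_apply_ne fun he => h (le_of_eq he)
  mul_mem' := fun {f g} hf hg x y h => by
    rw [Matrix.mul_apply]
    refine Finset.sum_eq_zero fun k _ => ?_
    by_cases hxk : x ≤ k
    · by_cases hky : k ≤ y
      · exact absurd (hxk.trans hky) h
      · rw [hg k y hky, mul_zero]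
    · rw [hf x k hxk, zero_mul]
  algebraMap_mem' := fun c x y h => by
    rw [Matrix.algebraMap_matrix_apply]
    exact if_neg fun he => h (le_of_eq he)

variable {X} in
/-- The standard basis element `e_{xy}` of the incidence algebra, for `x ≤ y`. -/
def eE (x y : X) (h : x ≤ y) : IncAlg K X :=
  ⟨Matrix.single x y 1, by
    intro a b hab
    by_cases hxa : x = a
    · by_cases hyb : y = b
      · subst hxa; subst hyb; exact absurd h hab
      · simp [Matrix.single, hyb]
    · simp [Matrix.single, hxa]⟩

variable {X} in
/-- The maximal length of a chain from `x` to `y` (the length `l(⌊x,y⌋)` of the interval). -/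
noncomputable def chainLen (x y : X) : ℕ :=
  sSup {m | ∃ c : Fin (m + 1) → X, StrictMono c ∧ c 0 = x ∧ c (Fin.last m) = y}

/-- The Jacobson radical of the incidence algebra: the functions vanishing on the diagonal. -/
def radJ : Submodule K (Matrix X X K) :=
  Submodule.span K {f | f ∈ IncAlg K X ∧ ∀ x : X, f x x = 0}

/-- `Jm K X m` is `Span_K {e_{xy} : l(⌊x,y⌋) ≥ m}`, i.e. `J_m = J(I(X,K))^m` for `m ≥ 1`. -/
noncomputable def Jm (m : ℕ) : Submodule K (Matrix X X K) :=
  Submodule.span K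
    {E | ∃ x y : X, x ≤ y ∧ m ≤ chainLen x y ∧ E = Matrix.single x y (1 : K)}

/-- `Lm K X i` is `L_i = Span_K {e_{xy} : l(⌊x,y⌋) = i}`. -/
noncomputable def Lm (i : ℕ) : Submodule K (Matrix X X K) :=
  Submodule.span K
    {E | ∃ x y : X, x ≤ y ∧ chainLen x y = i ∧ E = Matrix.single x y (1 : K)}

/-- The two-sided ideal of `I(X,K)` generated by a subset `S`: the smallest `K`-subspace
containing `S` that is closed under left and right multiplication by elements of `I(X,K)`. -/
def assocGen (S : Set (Matrix X X K)) : Submodule K (Matrix X X K) :=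
  sInf {I | S ⊆ I ∧ ∀ f ∈ IncAlg K X, ∀ g ∈ I, f * g ∈ I ∧ g * f ∈ I}

/-- A poset is connected if any two points are joined by a sequence of comparabilities. -/
def PosetConnected (X : Type*) [PartialOrder X] : Prop :=
  ∀ a b : X, Relation.ReflTransGen (fun u v : X => u ≤ v ∨ v ≤ u) a b

variable {K X} in
/-- `φ` is a Lie automorphism of the incidence algebra. -/
def IsLieAut (φ : IncAlg K X ≃ₗ[K] IncAlg K X) : Prop :=
  ∀ a b : IncAlg K X, φ (a * b - b * a) = φ a * φ b - φ b * φ a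

namespace Matrix

theorem commute_single_of_col_row {n α : Type*} [Fintype n] [DecidableEq n] [Semiring α]
    {i j : n} {M : Matrix n n α} (hcol : ∀ k ≠ i, M k i = 0) (hrow : ∀ k ≠ j, M j k = 0)
    (hdiag : M i i = M j j) : Commute (single i j 1) M := by
  ext a b
  by_cases ha : a = i <;> by_cases hb : b = j
  · subst ha hb
    simp [single_mul_apply_same, mul_single_apply_same, hdiag]
  · subst ha
    simp [single_mul_apply_same, mul_single_apply_of_ne _ _ _ _ _ hb, hrow b hb]
  · subst hb
    simp [single_mul_apply_of_ne _ _ _ _ _ ha, mul_single_apply_same, hcol a ha]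
  · rw [single_mul_apply_of_ne _ _ _ _ _ ha, mul_single_apply_of_ne _ _ _ _ _ hb]

theorem commute_single_iff {n α : Type*} [Fintype n] [DecidableEq n] [Semiring α]
    {i j : n} {M : Matrix n n α} :
    Commute (single i j 1) M ↔ (∀ k ≠ i, M k i = 0) ∧ (∀ k ≠ j, M j k = 0) ∧ M i i = M j j :=
  ⟨fun hM => ⟨fun _ hk => col_eq_zero_of_commute_single hM hk,
      fun _ hk => row_eq_zero_of_commute_single hM hk, diag_eq_of_commute_single hM⟩,
    fun ⟨hcol, hrow, hdiag⟩ => commute_single_of_col_row hcol hrow hdiag⟩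

end Matrix

section IncAlg

variable {K X} {f : Matrix X X K}

theorem IncAlg.forall_lt_apply_eq_zero_iff (hf : f ∈ IncAlg K X) (u : X) :
    (∀ x < u, f x u = 0) ↔ ∀ x ≠ u, f x u = 0 := by
  refine ⟨fun h x hx => ?_, fun h x hx => h x hx.ne⟩
  by_cases hxu : x ≤ u
  · exact h x (hxu.lt_of_ne hx)
  · exact hf x u hxu

theorem IncAlg.forall_gt_apply_eq_zero_iff (hf : f ∈ IncAlg K X) (v : X) :
    (∀ y, v < y → f v y = 0) ↔ ∀ y ≠ v, f v y = 0 := by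
  refine ⟨fun h y hy => ?_, fun h y hy => h y hy.ne'⟩
  by_cases hvy : v ≤ y
  · exact h y (hvy.lt_of_ne' hy)
  · exact hf v y hvy

end IncAlg

theorem stmt0 (f : Matrix X X K) (hf : f ∈ IncAlg K X) (u v : X) :
    f * Matrix.single u v (1 : K) = Matrix.single u v (1 : K) * f ↔
      (∀ x : X, x < u → f x u = 0) ∧ (∀ y : X, v < y → f v y = 0) ∧ f u u = f v v := by
  rw [IncAlg.forall_lt_apply_eq_zero_iff hf, IncAlg.forall_gt_apply_eq_zero_iff hf,
    ← commute_single_iff]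
  exact eq_comm
end

section
/- The derived ideal [I(X,K), I(X,K)] (the K-span of all commutators [f,g] = fg − gf) equals the Jacobson radical J(I(X,K)) = {f ∈ I(X,K) : f(x,x) = 0 for all x ∈ X}. -/
set_option maxHeartbeats 1000000
set_option synthInstance.maxHeartbeats 400000

open Matrix

variable (K X : Type*) [Field K] [Fintype X] [PartialOrder X] [DecidableEq X]

/-!
Incidence functions are upper triangular with respect to any linear extension of the order, so the
diagonal of a product is the product of the diagonals; hence every commutator vanishes on the
diagonal. Conversely, for `x < y` the unit `e_{xy}` is the commutator `[e_{xx}, e_{xy}]`, and a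
function vanishing on the diagonal is a combination of such units.
-/

theorem Matrix.single_eq_single_mul_sub_mul_single {n R : Type*} [Fintype n] [DecidableEq n]
    [Ring R] {x y : n} (hxy : x ≠ y) (c : R) :
    single x y c = single x x 1 * single x y c - single x y c * single x x 1 := by
  rw [single_mul_single_same, single_mul_single_of_ne (h := hxy.symm), one_mul, sub_zero]

variable {K X}

theorem single_mem_incAlg {x y : X} (hxy : x ≤ y) (c : K) : single x y c ∈ IncAlg K X := by
  intro a b hab
  rw [single_apply, if_neg]
  rintro ⟨rfl, rfl⟩
  exact hab hxy

theorem diag_mul_of_mem_incAlg {f g : Matrix X X K} (hf : f ∈ IncAlg K X)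
    (hg : g ∈ IncAlg K X) (x : X) : (f * g) x x = f x x * g x x := by
  rw [mul_apply]
  refine Finset.sum_eq_single x (fun k _ hkx => ?_) fun hx => (hx (Finset.mem_univ x)).elim
  by_cases hxk : x ≤ k
  · rw [hg k x fun hkx' => hkx (le_antisymm hkx' hxk), mul_zero]
  · rw [hf x k hxk, zero_mul]

theorem span_commutators_incAlg_eq :
    Submodule.span K {c : Matrix X X K |
        ∃ f ∈ IncAlg K X, ∃ g ∈ IncAlg K X, c = f * g - g * f} =
      Subalgebra.toSubmodule (IncAlg K X) ⊓ LinearMap.ker (diagLinearMap X K K) := by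
  refine le_antisymm (Submodule.span_le.mpr ?_) ?_
  · rintro c ⟨f, hf, g, hg, rfl⟩
    have hfg : f * g - g * f ∈ IncAlg K X := sub_mem (mul_mem hf hg) (mul_mem hg hf)
    refine ⟨hfg, funext fun x => ?_⟩
    change (f * g - g * f) x x = 0
    rw [Matrix.sub_apply, diag_mul_of_mem_incAlg hf hg, diag_mul_of_mem_incAlg hg hf, mul_comm,
      sub_self]
  · rintro f ⟨hf : f ∈ IncAlg K X, hdiag⟩
    have hdiag (x : X) : f x x = 0 := congr_fun hdiag x
    rw [matrix_eq_sum_single f]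
    refine Submodule.sum_mem _ fun x _ => Submodule.sum_mem _ fun y _ => ?_
    by_cases hxy : x ≤ y
    · rcases eq_or_ne x y with rfl | hne
      · simp [hdiag x]
      · exact Submodule.subset_span ⟨_, single_mem_incAlg le_rfl 1, _,
          single_mem_incAlg hxy (f x y), single_eq_single_mul_sub_mul_single hne _⟩
    · simp [hf x y hxy]

/-- the derived ideal `[I(X,K), I(X,K)]` equals the Jacobson radical
`{f ∈ I(X,K) : f(x,x) = 0 for all x}`. -/
theorem stmt1 :
    (Submodule.span K {c : Matrix X X K |
        ∃ f ∈ IncAlg K X, ∃ g ∈ IncAlg K X, c = f * g - g * f} : Set (Matrix X X K)) =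
      {f : Matrix X X K | f ∈ IncAlg K X ∧ ∀ x : X, f x x = 0} := by
  rw [span_commutators_incAlg_eq]
  ext f
  simp [funext_iff]
end

section
/- The center of the Lie algebra (J(I(X,K)), [·,·]) equals Span_K{e_{xy} : x < y, x is a minimal element of X and y is a maximal element of X}. -/
set_option maxHeartbeats 1000000
set_option synthInstance.maxHeartbeats 400000

open Matrix

variable (K X : Type*) [Field K] [Fintype X] [PartialOrder X] [DecidableEq X]

/-! If `f ∈ J` commutes with `e_{wu}` (`w < u`), then row `u` of `f` vanishes off the diagonal,
and if it commutes with `e_{vw}` (`v < w`), then so does column `v`; hence a central `f` is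
supported on pairs `x < y` with `x` minimal and `y` maximal. Conversely, for such a pair every
`g ∈ J` satisfies `e_{xy} g = 0 = g e_{xy}`, since `g` has no entries in row `y` or column `x`. -/

theorem Matrix.mem_span_single_of_apply_ne_zero {R m n : Type*} [Semiring R] [Fintype m]
    [Fintype n] [DecidableEq m] [DecidableEq n] {P : m → n → Prop} {f : Matrix m n R}
    (hf : ∀ u v, f u v ≠ 0 → P u v) :
    f ∈ Submodule.span R {E | ∃ u v, P u v ∧ E = single u v (1 : R)} := by
  rw [matrix_eq_sum_single f]
  refine Submodule.sum_mem _ fun u _ => Submodule.sum_mem _ fun v _ => ?_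
  by_cases h0 : f u v = 0
  · simp [h0]
  · rw [show single u v (f u v) = f u v • single u v 1 by rw [smul_single, smul_eq_mul, mul_one]]
    exact Submodule.smul_mem _ _ (Submodule.subset_span ⟨u, v, hf u v h0, rfl⟩)

theorem Matrix.commute_single_col_eq_zero {R n : Type*} [Semiring R] [Fintype n]
    [DecidableEq n] {f : Matrix n n R} {a b : n} (h : Commute f (single a b 1)) {u : n}
    (hu : u ≠ a) : f u a = 0 := by
  simpa [hu] using congrFun (congrFun h.eq u) b

theorem Matrix.commute_single_row_eq_zero {R n : Type*} [Semiring R] [Fintype n]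
    [DecidableEq n] {f : Matrix n n R} {a b : n} (h : Commute f (single a b 1)) {v : n}
    (hv : v ≠ b) : f b v = 0 := by
  simpa [hv] using (congrFun (congrFun h.eq a) v).symm

section

variable {K X}

theorem mem_radJ_iff {f : Matrix X X K} : f ∈ radJ K X ↔ ∀ x y, f x y ≠ 0 → x < y := by
  constructor
  · intro hf
    induction hf using Submodule.span_induction with
    | mem g hg =>
      intro x y hxy
      refine lt_of_le_of_ne (by_contra fun hle => hxy (hg.1 x y hle)) ?_
      rintro rfl
      exact hxy (hg.2 x)
    | zero => simp
    | add g h _ _ hg hh =>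
      intro x y hxy
      by_cases hgxy : g x y = 0
      · exact hh x y (by simpa [hgxy] using hxy)
      · exact hg x y hgxy
    | smul c g _ hg => exact fun x y hxy => hg x y (right_ne_zero_of_mul hxy)
  · intro hf
    refine Submodule.subset_span ⟨fun x y hxy => ?_, fun x => ?_⟩
    · exact by_contra fun h => hxy (hf x y h).le
    · exact by_contra fun h => (hf x x h).false

theorem single_mem_radJ {x y : X} (hxy : x < y) : single x y (1 : K) ∈ radJ K X := by
  rw [mem_radJ_iff]
  intro a b hab
  obtain ⟨rfl, rfl⟩ : x = a ∧ y = b := by_contra fun h => hab (single_apply_of_ne _ _ _ _ _ h)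
  exact hxy

theorem single_mul_eq_zero_of_isMax {x y : X} (hy : IsMax y) (c : K) {g : Matrix X X K}
    (hg : g ∈ radJ K X) : single x y c * g = 0 := by
  ext u v
  by_cases hu : u = x
  · subst hu
    rw [single_mul_apply_same, Matrix.zero_apply,
      by_contra fun h => (hy.not_lt (mem_radJ_iff.1 hg y v h)), mul_zero]
  · exact single_mul_apply_of_ne _ _ _ _ _ hu g

theorem mul_single_eq_zero_of_isMin {x y : X} (hx : IsMin x) (c : K) {g : Matrix X X K}
    (hg : g ∈ radJ K X) : g * single x y c = 0 := by
  ext u v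
  by_cases hv : v = y
  · subst hv
    rw [mul_single_apply_same, Matrix.zero_apply,
      by_contra fun h => (hx.not_lt (mem_radJ_iff.1 hg u x h)), zero_mul]
  · exact mul_single_apply_of_ne _ _ _ _ _ hv g

theorem isMin_isMax_of_mem_center {f : Matrix X X K} (hf : f ∈ radJ K X)
    (hcomm : ∀ g ∈ radJ K X, f * g = g * f) {u v : X} (huv : f u v ≠ 0) :
    u < v ∧ IsMin u ∧ IsMax v := by
  have hlt := mem_radJ_iff.1 hf u v huv
  refine ⟨hlt, by_contra fun hu => ?_, by_contra fun hv => ?_⟩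
  · obtain ⟨w, hwu⟩ := not_isMin_iff.1 hu
    exact huv (commute_single_row_eq_zero (hcomm _ (single_mem_radJ hwu)) hlt.ne')
  · obtain ⟨w, hvw⟩ := not_isMax_iff.1 hv
    exact huv (commute_single_col_eq_zero (hcomm _ (single_mem_radJ hvw)) hlt.ne)

theorem span_single_isMin_isMax_le :
    Submodule.span K {E : Matrix X X K |
        ∃ x y : X, x < y ∧ IsMin x ∧ IsMax y ∧ E = single x y (1 : K)} ≤
      radJ K X ⊓ (Subalgebra.centralizer K (radJ K X : Set (Matrix X X K))).toSubmodule := by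
  rw [Submodule.span_le]
  rintro E ⟨x, y, hxy, hx, hy, rfl⟩
  refine ⟨single_mem_radJ hxy, (Subalgebra.mem_centralizer_iff K).2 fun g hg => ?_⟩
  rw [mul_single_eq_zero_of_isMin hx 1 hg, single_mul_eq_zero_of_isMax hy 1 hg]

end

/-- the center of the Lie algebra `J(I(X,K))` is
`Span_K{e_{xy} : x < y, x minimal, y maximal}`. -/
theorem stmt4 :
    {f : Matrix X X K | f ∈ radJ K X ∧ ∀ g ∈ radJ K X, f * g = g * f} =
      (Submodule.span K {E : Matrix X X K |
          ∃ x y : X, x < y ∧ IsMin x ∧ IsMax y ∧ E = Matrix.single x y (1 : K)} :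
        Set (Matrix X X K)) := by
  ext f
  refine ⟨fun ⟨hf, hcomm⟩ => ?_, fun hf => ?_⟩
  · simpa only [SetLike.mem_coe, and_assoc] using
      mem_span_single_of_apply_ne_zero (f := f) fun _ _ => isMin_isMax_of_mem_center hf hcomm
  · obtain ⟨hfJ, hfC⟩ := span_single_isMin_isMax_le hf
    exact ⟨hfJ, fun g hg => ((Subalgebra.mem_centralizer_iff K).1 hfC g hg).symm⟩
end

section
/- For x ≤ y in X, the two-sided (associative) ideal of I(X,K) generated by e_{xy} equals Span_K{e_{uv} : u ≤ x and y ≤ v}. -/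
set_option maxHeartbeats 1000000
set_option synthInstance.maxHeartbeats 400000

open Matrix

variable (K X : Type*) [Field K] [Fintype X] [PartialOrder X] [DecidableEq X]

/-! The identity `e_{uv} = e_{ux} e_{xy} e_{yv}` for `u ≤ x ≤ y ≤ v` puts every `e_{uv}` of the
span into the ideal. Conversely the span is itself an ideal: for `f ∈ I(X,K)` one has
`f e_{uv} = ∑_{w ≤ u} f(w,u) e_{wv}` and `e_{uv} f = ∑_{v ≤ w} f(v,w) e_{uw}`, and `w ≤ u ≤ x`,
`y ≤ v ≤ w` keep these terms in the span. -/

namespace Matrix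

section Single

variable {l m n α : Type*} [DecidableEq l] [DecidableEq m] [DecidableEq n] [Semiring α]

theorem mul_single_eq_sum [Fintype l] [Fintype m] (M : Matrix l m α) (j : m) (k : n) (c : α) :
    M * single j k c = ∑ i, single i k (M i j * c) := by
  ext a b
  by_cases hb : k = b
  · subst hb; simp [Matrix.sum_apply, single_apply]
  · simp [Matrix.sum_apply, mul_single_apply_of_ne (hbj := Ne.symm hb), hb]

theorem single_mul_eq_sum [Fintype m] [Fintype n] (M : Matrix m n α) (i : l) (j : m) (c : α) :
    single i j c * M = ∑ k, single i k (c * M j k) := by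
  ext a b
  by_cases ha : i = a
  · subst ha; simp [Matrix.sum_apply, single_apply]
  · simp [Matrix.sum_apply, single_mul_apply_of_ne (h := Ne.symm ha), ha]

end Single

section SpanSingleIicIci

variable (R : Type*) {ι : Type*} [Semiring R] [Preorder ι] [DecidableEq ι]

def spanSingleIicIci (x y : ι) : Submodule R (Matrix ι ι R) :=
  Submodule.span R {E | ∃ u v : ι, u ≤ x ∧ y ≤ v ∧ E = single u v (1 : R)}

variable {R}

theorem single_mem_spanSingleIicIci {x y u v : ι} (hux : u ≤ x) (hyv : y ≤ v) (c : R) :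
    single u v c ∈ spanSingleIicIci R x y := by
  have hE : single u v (1 : R) ∈ spanSingleIicIci R x y :=
    Submodule.subset_span ⟨u, v, hux, hyv, rfl⟩
  simpa using Submodule.smul_mem _ c hE

end SpanSingleIicIci

end Matrix

section IncidenceAlgebra

variable {K X}

theorem single_one_mem_incAlg {u v : X} (h : u ≤ v) : single u v (1 : K) ∈ IncAlg K X :=
  (eE K u v h).2

theorem subset_assocGen (S : Set (Matrix X X K)) : S ⊆ assocGen K X S := fun _ hE =>
  Submodule.mem_sInf.2 fun _ hI => hI.1 hE

theorem mul_mem_assocGen_left {S : Set (Matrix X X K)} {f g : Matrix X X K}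
    (hf : f ∈ IncAlg K X) (hg : g ∈ assocGen K X S) : f * g ∈ assocGen K X S :=
  Submodule.mem_sInf.2 fun _ hI => (hI.2 f hf _ (Submodule.mem_sInf.1 hg _ hI)).1

theorem mul_mem_assocGen_right {S : Set (Matrix X X K)} {f g : Matrix X X K}
    (hf : f ∈ IncAlg K X) (hg : g ∈ assocGen K X S) : g * f ∈ assocGen K X S :=
  Submodule.mem_sInf.2 fun _ hI => (hI.2 f hf _ (Submodule.mem_sInf.1 hg _ hI)).2

theorem assocGen_le {S : Set (Matrix X X K)} {I : Submodule K (Matrix X X K)} (hS : S ⊆ I)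
    (hI : ∀ f ∈ IncAlg K X, ∀ g ∈ I, f * g ∈ I ∧ g * f ∈ I) : assocGen K X S ≤ I :=
  sInf_le ⟨hS, hI⟩

theorem mul_mem_spanSingleIicIci_left {x y : X} {f g : Matrix X X K} (hf : f ∈ IncAlg K X)
    (hg : g ∈ spanSingleIicIci K x y) : f * g ∈ spanSingleIicIci K x y := by
  suffices spanSingleIicIci K x y ≤ (spanSingleIicIci K x y).comap (LinearMap.mulLeft K f) from
    this hg
  refine Submodule.span_le.2 ?_
  rintro _ ⟨u, v, hux, hyv, rfl⟩
  rw [SetLike.mem_coe, Submodule.mem_comap, LinearMap.mulLeft_apply, mul_single_eq_sum]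
  refine Submodule.sum_mem _ fun w _ => ?_
  by_cases hwu : w ≤ u
  · exact single_mem_spanSingleIicIci (hwu.trans hux) hyv _
  · simp [hf w u hwu]

theorem mul_mem_spanSingleIicIci_right {x y : X} {f g : Matrix X X K} (hf : f ∈ IncAlg K X)
    (hg : g ∈ spanSingleIicIci K x y) : g * f ∈ spanSingleIicIci K x y := by
  suffices spanSingleIicIci K x y ≤ (spanSingleIicIci K x y).comap (LinearMap.mulRight K f) from
    this hg
  refine Submodule.span_le.2 ?_
  rintro _ ⟨u, v, hux, hyv, rfl⟩
  rw [SetLike.mem_coe, Submodule.mem_comap, LinearMap.mulRight_apply, single_mul_eq_sum]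
  refine Submodule.sum_mem _ fun w _ => ?_
  by_cases hvw : v ≤ w
  · exact single_mem_spanSingleIicIci hux (hyv.trans hvw) _
  · simp [hf v w hvw]

end IncidenceAlgebra

theorem stmt7 (x y : X) :
    assocGen K X {Matrix.single x y (1 : K)} =
      Submodule.span K {E : Matrix X X K |
        ∃ u v : X, u ≤ x ∧ y ≤ v ∧ E = Matrix.single u v (1 : K)} := by
  refine le_antisymm ?_ (Submodule.span_le.2 ?_)
  · refine assocGen_le (Set.singleton_subset_iff.2 (single_mem_spanSingleIicIci le_rfl le_rfl 1))
      fun f hf g hg => ⟨mul_mem_spanSingleIicIci_left hf hg, mul_mem_spanSingleIicIci_right hf hg⟩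
  · rintro _ ⟨u, v, hux, hyv, rfl⟩
    have hxy := subset_assocGen (K := K) {single x y 1} rfl
    have huxyv := mul_mem_assocGen_right (single_one_mem_incAlg hyv)
      (mul_mem_assocGen_left (single_one_mem_incAlg hux) hxy)
    simpa using huxyv
end

section
/- If e_{xy} lies in the two-sided ideal of I(X,K) generated by a subset S of J(I(X,K)), then there exist f ∈ S and elements u, v with x ≤ u < v ≤ y such that f(u,v) ≠ 0. -/
/-!
If every `f ∈ S` vanished at all `(u, v)` with `x ≤ u < v ≤ y`, then, since elements of the
radical also vanish whenever `¬ u < v`, every `f ∈ S` would vanish on the whole window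
`{u | x ≤ u} × {v | v ≤ y}`. The matrices vanishing on that window are closed under
multiplication by `I(X,K)` on both sides, so they would contain the ideal generated by `S`,
hence `e_{xy}`, which is `1` at `(x, y)`.
-/
set_option maxHeartbeats 1000000
set_option synthInstance.maxHeartbeats 400000

open Matrix

variable (K X : Type*) [Field K] [Fintype X] [PartialOrder X] [DecidableEq X]

lemma apply_eq_zero_of_mem_radJ {f : Matrix X X K} (hf : f ∈ radJ K X) {u v : X}
    (huv : ¬ u < v) : f u v = 0 := by
  induction hf using Submodule.span_induction with
  | mem g hg =>
    obtain ⟨hgI, hgdiag⟩ := hg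
    by_cases hle : u ≤ v
    · rw [(eq_or_lt_of_le hle).resolve_right huv]
      exact hgdiag v
    · exact hgI u v hle
  | zero => rfl
  | add g h _ _ hg hh => simp [hg, hh]
  | smul c g _ hg => simp [hg]

variable {X} in
/-- Testing on all of `{u | x ≤ u} × {v | v ≤ y}`, not only on pairs inside `[x, y]`, is what
makes this subspace stable under multiplication by `I(X,K)` on both sides. -/
def windowVanishing (x y : X) : Submodule K (Matrix X X K) where
  carrier := {M | ∀ u v : X, x ≤ u → v ≤ y → M u v = 0}
  zero_mem' := fun _ _ _ _ => rfl
  add_mem' := fun hf hg u v hu hv => by simp [hf u v hu hv, hg u v hu hv]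
  smul_mem' := fun c _ hf u v hu hv => by simp [hf u v hu hv]

namespace windowVanishing

variable {K X} {x y : X} {f g : Matrix X X K}

lemma mul_mem_left (hf : f ∈ IncAlg K X) (hg : g ∈ windowVanishing K x y) :
    f * g ∈ windowVanishing K x y := by
  intro u v hu hv
  rw [Matrix.mul_apply]
  refine Finset.sum_eq_zero fun k _ => ?_
  by_cases huk : u ≤ k
  · rw [hg k v (hu.trans huk) hv, mul_zero]
  · rw [hf u k huk, zero_mul]

lemma mul_mem_right (hf : f ∈ IncAlg K X) (hg : g ∈ windowVanishing K x y) :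
    g * f ∈ windowVanishing K x y := by
  intro u v hu hv
  rw [Matrix.mul_apply]
  refine Finset.sum_eq_zero fun k _ => ?_
  by_cases hkv : k ≤ v
  · rw [hg u k hu (hkv.trans hv), zero_mul]
  · rw [hf k v hkv, mul_zero]

end windowVanishing

lemma assocGen_le_windowVanishing {S : Set (Matrix X X K)} {x y : X}
    (hS : S ⊆ windowVanishing K x y) : assocGen K X S ≤ windowVanishing K x y :=
  sInf_le ⟨hS, fun _ hf _ hg =>
    ⟨windowVanishing.mul_mem_left hf hg, windowVanishing.mul_mem_right hf hg⟩⟩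

theorem stmt8 (S : Set (Matrix X X K)) (hS : ∀ f ∈ S, f ∈ radJ K X)
    (x y : X)
    (hmem : Matrix.single x y (1 : K) ∈ assocGen K X S) :
    ∃ f ∈ S, ∃ u v : X, x ≤ u ∧ u < v ∧ v ≤ y ∧ f u v ≠ 0 := by
  by_contra! hvanish
  have hSwindow : S ⊆ windowVanishing K x y := fun f hf u v hu hv => by
    by_cases huv : u < v
    · exact hvanish f hf u v hu huv hv
    · exact apply_eq_zero_of_mem_radJ K X (hS f hf) huv
  have hcorner := assocGen_le_windowVanishing K X hSwindow hmem x y le_rfl le_rfl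
  simp at hcorner
end

section
/- For any subset S of J(I(X,K)), the two-sided associative ideal generated by S coincides with the Lie ideal generated by S. Consequently, every Lie ideal of I(X,K) contained in J(I(X,K)) is a two-sided associative ideal. -/
/-!
Commutators with the diagonal idempotents `e_x` isolate the entries of a matrix, so a Lie ideal
inside `J(I(X,K))` contains every off-diagonal component `c e_xy` (`x < y`) of its members. For
such a component, products with any `f ∈ I(X,K)` on either side are again commutators, because
`f y x = 0`; summing over components, the Lie ideal is an associative ideal. The equality of the
generated ideals follows, as every associative ideal is a Lie ideal and the Lie ideal generated
by `S ⊆ J` stays inside `J`.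
-/
set_option maxHeartbeats 1000000
set_option synthInstance.maxHeartbeats 400000

open Matrix

variable (K X : Type*) [Field K] [Fintype X] [PartialOrder X] [DecidableEq X]

/-- The Lie ideal of `I(X,K)` generated by a subset `S`: the smallest `K`-subspace containing
`S` closed under commutators with all elements of `I(X,K)`. -/
def lieGen (K X : Type*) [Field K] [Fintype X] [PartialOrder X] [DecidableEq X]
    (S : Set (Matrix X X K)) : Submodule K (Matrix X X K) :=
  sInf {I : Submodule K (Matrix X X K) |
    S ⊆ I ∧ ∀ f ∈ IncAlg K X, ∀ g ∈ I, f * g - g * f ∈ I}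

namespace IncAlg

variable {K X}

def IsLieIdeal (I : Submodule K (Matrix X X K)) : Prop :=
  ∀ f ∈ IncAlg K X, ∀ g ∈ I, f * g - g * f ∈ I

def IsIdeal (I : Submodule K (Matrix X X K)) : Prop :=
  ∀ f ∈ IncAlg K X, ∀ g ∈ I, f * g ∈ I ∧ g * f ∈ I

theorem single_mem {x y : X} (h : x ≤ y) (c : K) : single x y c ∈ IncAlg K X := by
  have h1 : single x y (1 : K) ∈ IncAlg K X := (eE K x y h).2
  simpa [smul_single] using Subalgebra.smul_mem _ h1 c

theorem mul_apply_diag {f g : Matrix X X K} (hf : f ∈ IncAlg K X) (hg : g ∈ IncAlg K X)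
    (x : X) : (f * g) x x = f x x * g x x := by
  refine (Finset.sum_eq_single x (fun k _ hkx => ?_) (by simp)).trans rfl
  dsimp only
  by_cases hxk : x ≤ k
  · rw [hg k x fun hkx' => hkx (le_antisymm hkx' hxk), mul_zero]
  · rw [hf x k hxk, zero_mul]

theorem mem_radJ_iff {g : Matrix X X K} :
    g ∈ radJ K X ↔ g ∈ IncAlg K X ∧ ∀ x, g x x = 0 := by
  refine ⟨fun hg => ?_, fun hg => Submodule.subset_span hg⟩
  induction hg using Submodule.span_induction with
  | mem f hf => exact hf
  | zero => exact ⟨zero_mem _, fun _ => rfl⟩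
  | add f g _ _ hf hg => exact ⟨add_mem hf.1 hg.1, fun x => by simp [hf.2 x, hg.2 x]⟩
  | smul c f _ hf => exact ⟨Subalgebra.smul_mem _ hf.1 c, fun x => by simp [hf.2 x]⟩

theorem commutator_mem_radJ {f g : Matrix X X K} (hf : f ∈ IncAlg K X)
    (hg : g ∈ IncAlg K X) : f * g - g * f ∈ radJ K X :=
  mem_radJ_iff.2 ⟨sub_mem (mul_mem hf hg) (mul_mem hg hf), fun x => by
    rw [Matrix.sub_apply, mul_apply_diag hf hg, mul_apply_diag hg hf, mul_comm, sub_self]⟩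

theorem isLieIdeal_radJ : IsLieIdeal (radJ K X) :=
  fun _ hf _ hg => commutator_mem_radJ hf (mem_radJ_iff.1 hg).1

theorem IsIdeal.isLieIdeal {I : Submodule K (Matrix X X K)} (hI : IsIdeal I) : IsLieIdeal I :=
  fun f hf g hg => sub_mem (hI f hf g hg).1 (hI f hf g hg).2

theorem subset_lieGen (S : Set (Matrix X X K)) : S ⊆ lieGen K X S :=
  fun _ hs => Submodule.mem_sInf.2 fun _ hI => hI.1 hs

theorem isLieIdeal_lieGen (S : Set (Matrix X X K)) : IsLieIdeal (lieGen K X S) :=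
  fun f hf _ hg => Submodule.mem_sInf.2 fun I hI => hI.2 f hf _ (Submodule.mem_sInf.1 hg I hI)

theorem lieGen_le_radJ {S : Set (Matrix X X K)} (hS : S ⊆ radJ K X) : lieGen K X S ≤ radJ K X :=
  sInf_le ⟨hS, isLieIdeal_radJ⟩

namespace IsLieIdeal

variable {I : Submodule K (Matrix X X K)} (hI : IsLieIdeal I)
include hI

/-- An entry above the diagonal of `g` is isolated by the double commutator
`[e_y, [e_x, g]] = -g x y • e_xy`. -/
theorem single_apply_mem {g : Matrix X X K} (hgI : g ∈ I) (hg : g ∈ IncAlg K X) {x y : X}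
    (hxy : x ≤ y) (hne : x ≠ y) : single x y (g x y) ∈ I := by
  have hgyx : g y x = 0 := hg y x fun hyx => hne (le_antisymm hxy hyx)
  have h := hI (single y y 1) (single_mem le_rfl 1) _
    (hI (single x x 1) (single_mem le_rfl 1) g hgI)
  have : single y y (1 : K) * (single x x 1 * g - g * single x x 1) -
      (single x x 1 * g - g * single x x 1) * single y y 1 = -single x y (g x y) := by
    simp [mul_sub, sub_mul, ← mul_assoc, hne.symm, hgyx, mul_assoc g, hne]
  rwa [this, neg_mem_iff] at h

/-- When `f y x = 0`, both products are commutators: `f * c e_xy = [f * e_x, c e_xy]` and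
`c e_xy * f = -[e_y * f, c e_xy]`. -/
theorem mul_single_mem {x y : X} {c : K} (hc : single x y c ∈ I)
    {f : Matrix X X K} (hf : f ∈ IncAlg K X) (hfyx : f y x = 0) :
    f * single x y c ∈ I ∧ single x y c * f ∈ I := by
  constructor
  · have : f * single x x 1 * single x y c - single x y c * (f * single x x 1) =
        f * single x y c := by
      rw [mul_assoc, single_mul_single_same, one_mul, ← mul_assoc, single_mul_mul_single, hfyx]
      simp
    simpa [this] using hI (f * single x x 1) (mul_mem hf (single_mem le_rfl 1)) _ hc
  · have : single y y 1 * f * single x y c - single x y c * (single y y 1 * f) =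
        -(single x y c * f) := by
      simp [← mul_assoc, hfyx]
    have h := hI (single y y 1 * f) (mul_mem (single_mem le_rfl 1) hf) _ hc
    rwa [this, neg_mem_iff] at h

theorem isIdeal (hJ : I ≤ radJ K X) : IsIdeal I := by
  intro f hf g hg
  obtain ⟨hgA, hgd⟩ := mem_radJ_iff.1 (hJ hg)
  have hentry (x y : X) : f * single x y (g x y) ∈ I ∧ single x y (g x y) * f ∈ I := by
    rcases eq_or_ne x y with rfl | hne
    · simp [hgd x]
    by_cases hxy : x ≤ y
    · exact hI.mul_single_mem (hI.single_apply_mem hg hgA hxy hne) hf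
        (hf y x fun hyx => hne (le_antisymm hxy hyx))
    · simp [hgA x y hxy]
  rw [matrix_eq_sum_single g]
  simp only [Finset.mul_sum, Finset.sum_mul]
  exact ⟨sum_mem fun x _ => sum_mem fun y _ => (hentry x y).1,
    sum_mem fun x _ => sum_mem fun y _ => (hentry x y).2⟩

end IsLieIdeal

end IncAlg

/-- for `S ⊆ J(I(X,K))`, the associative ideal generated by `S` equals the Lie
ideal generated by `S`; consequently every Lie ideal contained in `J(I(X,K))` is a two-sided
associative ideal. -/
theorem stmt9 :
    (∀ S : Set (Matrix X X K), (∀ f ∈ S, f ∈ radJ K X) →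
      assocGen K X S = lieGen K X S) ∧
    (∀ I : Submodule K (Matrix X X K), I ≤ radJ K X →
      (∀ f ∈ IncAlg K X, ∀ g ∈ I, f * g - g * f ∈ I) →
      ∀ f ∈ IncAlg K X, ∀ g ∈ I, f * g ∈ I ∧ g * f ∈ I) := by
  refine ⟨fun S hS => le_antisymm ?_ ?_, fun I hJ hI => IncAlg.IsLieIdeal.isIdeal hI hJ⟩
  · exact sInf_le ⟨IncAlg.subset_lieGen S,
      (IncAlg.isLieIdeal_lieGen S).isIdeal (IncAlg.lieGen_le_radJ hS)⟩
  · exact sInf_le_sInf fun I hI => ⟨hI.1, IncAlg.IsIdeal.isLieIdeal hI.2⟩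
end

section
/- Let I ⊆ J_m be a two-sided ideal of I(X,K) such that dim_K(I / (I ∩ J_{m+1})) = 1. Then there exists a unique basis element e_{xy} ∈ J_m − J_{m+1} such that every f ∈ I − J_{m+1} has the form f = f(x,y)·e_{xy} + j with j ∈ J_{m+1}. -/
set_option maxHeartbeats 1000000
set_option synthInstance.maxHeartbeats 400000

open Matrix

variable (K X : Type*) [Field K] [Fintype X] [PartialOrder X] [DecidableEq X]

/-!
The diagonal idempotents `e_{xx}` lie in `I(X,K)`, so a two-sided ideal containing `f` contains
`e_{xx} f e_{yy} = f(x,y) e_{xy}`, hence `e_{xy}` whenever `f(x,y) ≠ 0`. Every `f ∈ I − J_{m+1}`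
has a nonzero coefficient at some `(x,y)` with `l(⌊x,y⌋) = m`, so `e_{xy} ∈ I − J_{m+1}`; as the
quotient `I/(I ∩ J_{m+1})` is a line, it is spanned by the class of `e_{xy}`, and comparing
coefficients at `(x,y)` identifies the scalar as `f(x,y)`. Uniqueness follows by applying the
property of another pair to `e_{xy}` itself.
-/

namespace Submodule

variable {K V : Type*} [Field K] [AddCommGroup V] [Module K V] {I N : Submodule K V}

theorem exists_mem_notMem_of_finrank_quotient_pos
    (h : 0 < Module.finrank K (I ⧸ N.comap I.subtype)) : ∃ f ∈ I, f ∉ N := by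
  have := Module.nontrivial_of_finrank_pos h
  obtain ⟨q, hq⟩ := exists_ne (0 : I ⧸ N.comap I.subtype)
  obtain ⟨f, rfl⟩ := Quotient.mk_surjective _ q
  exact ⟨f, f.2, fun hf => hq ((Quotient.mk_eq_zero _).2 hf)⟩

theorem exists_sub_smul_mem_of_finrank_quotient_eq_one
    (h : Module.finrank K (I ⧸ N.comap I.subtype) = 1) {e f : V} (heI : e ∈ I) (heN : e ∉ N)
    (hf : f ∈ I) : ∃ c : K, f - c • e ∈ N := by
  have he : (Quotient.mk ⟨e, heI⟩ : I ⧸ N.comap I.subtype) ≠ 0 :=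
    fun h0 => heN ((Quotient.mk_eq_zero (N.comap I.subtype)).1 h0)
  obtain ⟨c, hc⟩ := (finrank_eq_one_iff_of_nonzero' _ he).1 h (Quotient.mk ⟨f, hf⟩)
  rw [← Quotient.mk_smul, Quotient.eq] at hc
  exact ⟨c, by simpa using N.neg_mem hc⟩

end Submodule

namespace Matrix

variable {ι R : Type*} [Fintype ι] [DecidableEq ι] [Semiring R]

theorem mem_span_single_one_iff (P : ι → ι → Prop) {g : Matrix ι ι R} :
    g ∈ Submodule.span R {E | ∃ i j, P i j ∧ E = single i j 1} ↔
      ∀ i j, g i j ≠ 0 → P i j := by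
  constructor
  · intro hg
    suffices ∀ i j, ¬ P i j → g i j = 0 from fun i j hne => by_contra fun hP => hne (this i j hP)
    induction hg using Submodule.span_induction with
    | mem E hE =>
      obtain ⟨a, b, hab, rfl⟩ := hE
      rintro i j hij
      exact single_apply_of_ne _ _ _ _ _ fun ⟨ha, hb⟩ => hij (ha ▸ hb ▸ hab)
    | zero => exact fun _ _ _ => rfl
    | add f g _ _ hf hg => exact fun i j h => by simp [hf i j h, hg i j h]
    | smul c f _ hf => exact fun i j h => by simp [hf i j h]
  · intro h
    rw [matrix_eq_sum_single g]
    refine Submodule.sum_mem _ fun i _ => Submodule.sum_mem _ fun j _ => ?_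
    by_cases hij : g i j = 0
    · simp [hij]
    · rw [← mul_one (g i j), ← smul_eq_mul, ← smul_single]
      exact Submodule.smul_mem _ _ (Submodule.subset_span ⟨i, j, h i j hij, rfl⟩)

end Matrix

section IncidenceAlgebra

variable {K X}

theorem mem_Jm_iff {n : ℕ} {g : Matrix X X K} :
    g ∈ Jm K X n ↔ ∀ x y, g x y ≠ 0 → x ≤ y ∧ n ≤ chainLen x y := by
  simp_rw [Jm, ← and_assoc]
  exact Matrix.mem_span_single_one_iff _

theorem apply_eq_zero_of_mem_Jm {n : ℕ} {g : Matrix X X K} (hg : g ∈ Jm K X n) {x y : X}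
    (hxy : chainLen x y < n) : g x y = 0 := by
  by_contra hne
  exact (mem_Jm_iff.1 hg x y hne).2.not_gt hxy

theorem single_one_mem_Jm_iff {n : ℕ} {x y : X} :
    Matrix.single x y (1 : K) ∈ Jm K X n ↔ x ≤ y ∧ n ≤ chainLen x y := by
  refine ⟨fun h => mem_Jm_iff.1 h x y (by simp), fun h => ?_⟩
  exact Submodule.subset_span ⟨x, y, h.1, h.2, rfl⟩

theorem exists_chainLen_eq_of_mem_Jm_of_notMem {m : ℕ} {f : Matrix X X K}
    (hm : f ∈ Jm K X m) (hm1 : f ∉ Jm K X (m + 1)) :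
    ∃ x y, x ≤ y ∧ chainLen x y = m ∧ f x y ≠ 0 := by
  obtain ⟨x, y, hne, hlt⟩ : ∃ x y, f x y ≠ 0 ∧ ¬ (x ≤ y ∧ m + 1 ≤ chainLen x y) := by
    simpa [mem_Jm_iff] using hm1
  obtain ⟨hxy, hlen⟩ := mem_Jm_iff.1 hm x y hne
  have hlt' : ¬ m + 1 ≤ chainLen x y := fun h => hlt ⟨hxy, h⟩
  exact ⟨x, y, hxy, by omega, hne⟩

theorem single_one_mem_of_apply_ne_zero {I : Submodule K (Matrix X X K)}
    (hideal : ∀ f ∈ IncAlg K X, ∀ g ∈ I, f * g ∈ I ∧ g * f ∈ I)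
    {f : Matrix X X K} (hf : f ∈ I) {x y : X} (hxy : f x y ≠ 0) :
    Matrix.single x y (1 : K) ∈ I := by
  have hsingle : Matrix.single x y (f x y) ∈ I := by
    have hleft := (hideal (Matrix.single x x 1) (eE K x x le_rfl).2 f hf).1
    simpa using (hideal (Matrix.single y y 1) (eE K y y le_rfl).2 _ hleft).2
  simpa [Matrix.smul_single, hxy] using I.smul_mem (f x y)⁻¹ hsingle

theorem stmt11_general (m : ℕ) (I : Submodule K (Matrix X X K))
    (hI : I ≤ Jm K X m)
    (hideal : ∀ f ∈ IncAlg K X, ∀ g ∈ I, f * g ∈ I ∧ g * f ∈ I)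
    (hdim : Module.finrank K (↥I ⧸ (Jm K X (m + 1) ⊓ I).comap I.subtype) = 1) :
    ∃! p : X × X, p.1 ≤ p.2 ∧
      Matrix.single p.1 p.2 (1 : K) ∈ Jm K X m ∧
      Matrix.single p.1 p.2 (1 : K) ∉ Jm K X (m + 1) ∧
      ∀ f ∈ I, f ∉ Jm K X (m + 1) →
        f - f p.1 p.2 • Matrix.single p.1 p.2 (1 : K) ∈ Jm K X (m + 1) := by
  rw [Submodule.comap_inf, Submodule.comap_subtype_self, inf_top_eq] at hdim
  obtain ⟨f₀, hf₀I, hf₀⟩ := Submodule.exists_mem_notMem_of_finrank_quotient_pos (hdim ▸ one_pos)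
  obtain ⟨x, y, hxy, hlen, hne⟩ := exists_chainLen_eq_of_mem_Jm_of_notMem (hI hf₀I) hf₀
  have hEm : Matrix.single x y (1 : K) ∈ Jm K X m := single_one_mem_Jm_iff.2 ⟨hxy, hlen.ge⟩
  have hEm1 : Matrix.single x y (1 : K) ∉ Jm K X (m + 1) := by
    simp [single_one_mem_Jm_iff, hlen]
  have hEI := single_one_mem_of_apply_ne_zero hideal hf₀I hne
  refine ⟨(x, y), ⟨hxy, hEm, hEm1, fun f hf _ => ?_⟩, ?_⟩
  · obtain ⟨c, hc⟩ := Submodule.exists_sub_smul_mem_of_finrank_quotient_eq_one hdim hEI hEm1 hf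
    have hcoeff : (f - c • Matrix.single x y (1 : K)) x y = 0 :=
      apply_eq_zero_of_mem_Jm hc (by omega)
    rw [Matrix.sub_apply, Matrix.smul_apply, Matrix.single_apply_same, smul_eq_mul, mul_one,
      sub_eq_zero] at hcoeff
    rwa [hcoeff]
  · rintro ⟨x', y'⟩ ⟨-, -, -, h⟩
    by_contra hne'
    have := h _ hEI hEm1
    rw [Matrix.single_apply_of_ne _ _ _ _ _ fun ⟨hx, hy⟩ => hne' (Prod.ext hx.symm hy.symm),
      zero_smul, sub_zero] at this
    exact hEm1 this

/-- if `I ⊆ J_m` is a two-sided ideal of `I(X,K)` with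
`dim_K(I/(I ∩ J_{m+1})) = 1`, then there is a unique `e_{xy} ∈ J_m − J_{m+1}` such that every
`f ∈ I − J_{m+1}` is of the form `f = f(x,y)·e_{xy} + j` with `j ∈ J_{m+1}`. -/
theorem stmt11 (m : ℕ) (hm : 1 ≤ m) (I : Submodule K (Matrix X X K))
    (hI : I ≤ Jm K X m)
    (hideal : ∀ f ∈ IncAlg K X, ∀ g ∈ I, f * g ∈ I ∧ g * f ∈ I)
    (hdim : Module.finrank K (↥I ⧸ (Jm K X (m + 1) ⊓ I).comap I.subtype) = 1) :
    ∃! p : X × X, p.1 ≤ p.2 ∧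
      Matrix.single p.1 p.2 (1 : K) ∈ Jm K X m ∧
      Matrix.single p.1 p.2 (1 : K) ∉ Jm K X (m + 1) ∧
      ∀ f ∈ I, f ∉ Jm K X (m + 1) →
        f - f p.1 p.2 • Matrix.single p.1 p.2 (1 : K) ∈ Jm K X (m + 1) :=
  stmt11_general m I hI hideal hdim
end IncidenceAlgebra
end

section
/- Let φ be a Lie automorphism of I(X,K) such that for every basis element e_{xy} ∈ L_i one has φ(e_{xy}) − e_{xy} ∈ J_{i+1} (i.e., the induced map on each layer is the identity). Then φ(e_x) belongs to the two-sided ideal generated by e_x, for all x ∈ X. -/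
set_option maxHeartbeats 1000000
set_option synthInstance.maxHeartbeats 400000

open Matrix

variable (K X : Type*) [Field K] [Fintype X] [PartialOrder X] [DecidableEq X]

variable {K X} in
/-- `φ` lies in the kernel of `φ ↦ φ̃`: for `a ∈ L_i`, `φ(a) − a ∈ J_{i+1}`. -/
def InTildeKernel (φ : IncAlg K X ≃ₗ[K] IncAlg K X) : Prop :=
  ∀ (i : ℕ) (a : IncAlg K X), (a : Matrix X X K) ∈ Lm K X i →
    ((φ a : Matrix X X K) - (a : Matrix X X K)) ∈ Jm K X (i + 1)

/-!
Write `φ(e_w) = e_w + s_w`; the hypothesis in degree `0` says that every `s_w` is strictly upper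
triangular. For `w ≠ x` the idempotents `e_x, e_w` commute, hence so do `φ(e_x), φ(e_w)`. If
`u < v` and `u, v ≠ x`, the `(u, v)` entry of `[φ(e_x), φ(e_u)] = 0` reads
`s_x(u, v) = [s_x, s_u](u, v)`, and the right-hand side only involves entries of `s_x` on
intervals strictly inside `[u, v]`. Induction on intervals shows that `s_x(u, v) = 0` unless
`u ≤ x ≤ v`, so `φ(e_x)` is a combination of the `e_{uv} = e_{ux} e_x e_{xv}` with `u ≤ x ≤ v`.
-/

open OrderDual

namespace Matrix

variable {ι : Type*}

def supported (R : Type*) [Semiring R] (P : ι → ι → Prop) : Submodule R (Matrix ι ι R) where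
  carrier := {M | ∀ a b, ¬ P a b → M a b = 0}
  add_mem' hM hN a b h := by simp [hM a b h, hN a b h]
  zero_mem' _ _ _ := rfl
  smul_mem' c M hM a b h := by simp [hM a b h]

variable {R : Type*} [Ring R] {P : ι → ι → Prop}

theorem single_mem_supported [DecidableEq ι] {a b : ι} (h : P a b) (c : R) :
    single a b c ∈ supported R P := fun a' b' h' => by
  rw [single_apply_of_ne]
  rintro ⟨rfl, rfl⟩
  exact h' h

variable [Fintype ι] [DecidableEq ι]

theorem apply_eq_commutator_apply_of_commute {x u v : ι} {r s : Matrix ι ι R}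
    (hux : u ≠ x) (hvx : v ≠ x) (huv : u ≠ v)
    (h : Commute (single x x 1 + r) (single u u 1 + s)) : r u v = (r * s - s * r) u v := by
  have := congrFun (congrFun h.eq u) v
  simp only [mul_add, add_mul, add_apply, single_mul_single_of_ne _ _ _ _ hux.symm,
    single_mul_apply_of_ne _ _ _ _ _ hux, mul_single_apply_of_ne _ _ _ _ _ hvx,
    mul_single_apply_of_ne _ _ _ _ _ huv.symm, single_mul_apply_same, one_mul, zero_add] at this
  rw [sub_apply, this, add_sub_cancel_right]

variable [PartialOrder ι]

theorem mem_supported_of_commute_single_add {x : ι} {A : Matrix ι ι R} {B : ι → Matrix ι ι R}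
    (hA : A - single x x 1 ∈ supported R (· < ·))
    (hB : ∀ w, w ≠ x → B w - single w w 1 ∈ supported R (· < ·))
    (hcomm : ∀ w, w ≠ x → Commute A (B w)) :
    A ∈ supported R fun u v => u ≤ x ∧ x ≤ v := by
  set r := A - single x x 1
  suffices hr : r ∈ supported R fun u v => u ≤ x ∧ x ≤ v by
    simpa [r] using add_mem (single_mem_supported ⟨le_rfl, le_rfl⟩ 1) hr
  suffices ∀ p : ι × ι, ¬ (p.1 ≤ x ∧ x ≤ p.2) → r p.1 p.2 = 0 from fun u v => this (u, v)
  intro p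
  -- intervals `[u, v]` ordered by inclusion, i.e. `(toDual u, v)` in the product order
  induction p using (InvImage.wf (fun p : ι × ι => (toDual p.1, p.2)) wellFounded_lt).induction
    with | _ p ih => ?_
  obtain ⟨u, v⟩ := p
  intro hout
  dsimp only at hout ⊢
  have hsmaller : ∀ a b, u ≤ a → b ≤ v → (a, b) ≠ (u, v) → r a b = 0 := by
    intro a b hua hbv hne
    refine ih (a, b) (lt_of_le_of_ne ⟨toDual_le_toDual.2 hua, hbv⟩ ?_) fun hab =>
      hout ⟨hua.trans hab.1, hab.2.trans hbv⟩
    simpa using hne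
  by_cases huv : u < v
  case neg => exact hA u v huv
  have hux : u ≠ x := by rintro rfl; exact hout ⟨le_rfl, huv.le⟩
  have hvx : v ≠ x := by rintro rfl; exact hout ⟨huv.le, le_rfl⟩
  set s := B u - single u u 1
  have hs : s ∈ supported R (· < ·) := hB u hux
  rw [apply_eq_commutator_apply_of_commute hux hvx huv.ne (r := r) (s := s)
    (by simpa [r, s] using hcomm u hux), sub_apply, mul_apply, mul_apply]
  refine sub_eq_zero.2 <|
    (Finset.sum_eq_zero fun k _ => ?_).trans (Finset.sum_eq_zero fun k _ => ?_).symm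
  · by_cases hkv : k < v
    · rw [hsmaller u k le_rfl hkv.le (by simpa using hkv.ne), zero_mul]
    · rw [hs k v hkv, mul_zero]
  · by_cases huk : u < k
    · rw [hsmaller k v huk.le le_rfl (by simpa using huk.ne'), mul_zero]
    · rw [hs u k huk, zero_mul]

end Matrix

section IncidenceAlgebra

variable {K X}

theorem chainLen_self {α : Type*} [PartialOrder α] (a : α) : chainLen a a = 0 :=
  Nat.eq_zero_of_le_zero <| csSup_le' fun m ⟨c, hc, h0, hlast⟩ => by
    obtain _ | m := m
    · rfl
    · have := hc (Fin.last_pos (n := m))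
      rw [h0, hlast] at this
      exact absurd this (lt_irrefl a)

omit [Fintype X] in
theorem Jm_one_le_supported : Jm K X 1 ≤ supported K (· < ·) :=
  Submodule.span_le.2 <| by
    rintro _ ⟨a, b, hab, hlen, rfl⟩
    refine single_mem_supported (hab.lt_of_ne ?_) 1
    rintro rfl
    simp [chainLen_self] at hlen

theorem coe_eE_self_mem_Lm_zero (x : X) : (eE K x x le_rfl : Matrix X X K) ∈ Lm K X 0 :=
  Submodule.subset_span ⟨x, x, le_rfl, chainLen_self x, rfl⟩

theorem commute_eE_self {x w : X} (h : x ≠ w) : Commute (eE K x x le_rfl) (eE K w w le_rfl) :=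
  Subtype.ext <| by
    simp [eE, single_mul_single_of_ne _ _ _ _ h, single_mul_single_of_ne _ _ _ _ h.symm]

theorem IsLieAut.map_commute {φ : IncAlg K X ≃ₗ[K] IncAlg K X} (hφ : IsLieAut φ)
    {a b : IncAlg K X} (h : Commute a b) : Commute (φ a) (φ b) := by
  have h0 := hφ a b
  rwa [h.eq, sub_self, map_zero, eq_comm, sub_eq_zero] at h0

theorem InTildeKernel.coe_apply_eE_self_sub_mem_supported {φ : IncAlg K X ≃ₗ[K] IncAlg K X}
    (hφ : InTildeKernel φ) (w : X) :
    (φ (eE K w w le_rfl) : Matrix X X K) - single w w 1 ∈ supported K (· < ·) :=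
  Jm_one_le_supported (hφ 0 _ (coe_eE_self_mem_Lm_zero w))

theorem mem_assocGen_single_of_mem_supported {x : X} {M : Matrix X X K}
    (hM : M ∈ supported K fun u v => u ≤ x ∧ x ≤ v) :
    M ∈ assocGen K X {single x x 1} := by
  refine Submodule.mem_sInf.2 fun I ⟨hxI, hI⟩ => ?_
  have hsingle : ∀ a b, a ≤ x → x ≤ b → single a b (1 : K) ∈ I := fun a b hax hxb => by
    simpa [eE] using (hI _ (eE K a x hax).2 _ (hI _ (eE K x b hxb).2 _ (hxI rfl)).2).1
  rw [matrix_eq_sum_single M]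
  refine Submodule.sum_mem _ fun a _ => Submodule.sum_mem _ fun b _ => ?_
  by_cases hab : a ≤ x ∧ x ≤ b
  · simpa [smul_single] using I.smul_mem (M a b) (hsingle a b hab.1 hab.2)
  · rw [hM a b hab, single_zero]
    exact I.zero_mem

end IncidenceAlgebra

theorem stmt13
    (φ : IncAlg K X ≃ₗ[K] IncAlg K X) (hφ : IsLieAut φ) (hker : InTildeKernel φ) (x : X) :
    (φ (eE K x x le_rfl) : Matrix X X K) ∈
      assocGen K X {Matrix.single x x (1 : K)} :=
  mem_assocGen_single_of_mem_supported <|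
    mem_supported_of_commute_single_add (B := fun w => (φ (eE K w w le_rfl) : Matrix X X K))
      (hker.coe_apply_eE_self_sub_mem_supported x)
      (fun w _ => hker.coe_apply_eE_self_sub_mem_supported w)
      fun _ hw => (hφ.map_commute (commute_eE_self hw.symm)).map (IncAlg K X).val
end

section
/- Let φ be an elementary Lie automorphism of I(X,K) (i.e., φ(L_i) ⊆ L_i for all i ≥ 0), with θ its induced bijection of B = {e_{xy} : x < y} and σ : {(x,y) : x < y} → K* its induced scalar map, so that φ(e_{xy}) = σ(x,y)·θ(e_{xy}). Then for all x < y < z: either θ(e_{xz}) = θ(e_{xy})·θ(e_{yz}) and σ(x,z) = σ(x,y)σ(y,z), or θ(e_{xz}) = θ(e_{yz})·θ(e_{xy}) and σ(x,z) = −σ(x,y)σ(y,z). -/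
/-!
Since `e_{xz} = e_{xy} e_{yz} - e_{yz} e_{xy}`, the Lie automorphism sends `e_{xz}` to the
commutator of `σ(x,y) θ(e_{xy})` and `σ(y,z) θ(e_{yz})`. For two matrix units above the
diagonal at most one of their two products is nonzero; as `σ(x,z) θ(e_{xz}) ≠ 0`, exactly one
is, and it fixes both the order of the product and the sign of `σ(x,z)`.
-/

set_option maxHeartbeats 1000000
set_option synthInstance.maxHeartbeats 400000

open Matrix

variable (K X : Type*) [Field K] [Fintype X] [PartialOrder X] [DecidableEq X]

variable {K X} in
/-- `φ` is elementary: `φ(L_i) ⊆ L_i` for every `i ≥ 0`. -/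
def IsElementary (φ : IncAlg K X ≃ₗ[K] IncAlg K X) : Prop :=
  ∀ (i : ℕ) (a : IncAlg K X), (a : Matrix X X K) ∈ Lm K X i →
    (φ a : Matrix X X K) ∈ Lm K X i

namespace Matrix

variable {n R : Type*} [DecidableEq n]

lemma single_inj_of_ne_zero [Zero R] {p q a d : n} {u v : R} (hu : u ≠ 0)
    (h : single p q u = single a d v) : p = a ∧ q = d ∧ u = v := by
  have hpq := congrFun (congrFun h p) q
  rw [single_apply_same] at hpq
  by_cases had : a = p ∧ d = q
  · obtain ⟨rfl, rfl⟩ := had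
    simpa using hpq
  · rw [single_apply_of_ne (h := had)] at hpq
    exact absurd hpq hu

variable [Fintype n]

lemma single_mul_single_sub_single_mul_single [Ring R] {x y z : n} (hzx : z ≠ x) (a b : R) :
    single x y a * single y z b - single y z b * single x y a = single x z (a * b) := by
  rw [single_mul_single_same, single_mul_single_of_ne (h := hzx), sub_zero]

/-- At most one of the two products of the units is nonzero, since `b = c` and `d = a` together
would give `a < b < d = a`. -/
lemma smul_single_eq_commutator [CommRing R] [Preorder n] {p q a b c d : n} (hab : a < b)
    (hcd : c < d) {s t u : R} (hu : u ≠ 0)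
    (h : u • single p q (1 : R) =
      (s • single a b 1) * (t • single c d 1) - (t • single c d 1) * (s • single a b 1)) :
    (single p q (1 : R) = single a b 1 * single c d 1 ∧ u = s * t) ∨
      (single p q (1 : R) = single c d 1 * single a b 1 ∧ u = -(s * t)) := by
  simp only [smul_single, smul_eq_mul, mul_one] at h
  by_cases hbc : b = c
  · subst hbc
    rw [single_mul_single_same, single_mul_single_of_ne (h := (hab.trans hcd).ne'), sub_zero] at h
    obtain ⟨rfl, rfl, rfl⟩ := single_inj_of_ne_zero hu h
    simp
  by_cases hda : d = a
  · subst hda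
    rw [single_mul_single_of_ne (h := hbc), single_mul_single_same, zero_sub, single_neg] at h
    obtain ⟨rfl, rfl, rfl⟩ := single_inj_of_ne_zero hu h
    simp [mul_comm]
  rw [single_mul_single_of_ne (h := hbc), single_mul_single_of_ne (h := hda), sub_zero,
    ← single_zero p q] at h
  exact absurd (single_inj_of_ne_zero hu h).2.2 hu

end Matrix

variable {X} in
lemma eE_mul_eE_sub_eE_mul_eE {x y z : X} (hxy : x ≤ y) (hyz : y ≤ z) (hzx : z ≠ x) :
    eE K x y hxy * eE K y z hyz - eE K y z hyz * eE K x y hxy = eE K x z (hxy.trans hyz) :=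
  Subtype.ext <| by
    simpa only [eE, Subalgebra.coe_sub, Subalgebra.coe_mul, mul_one] using
      single_mul_single_sub_single_mul_single hzx (1 : K) 1

theorem stmt17
    (φ : IncAlg K X ≃ₗ[K] IncAlg K X) (hφ : IsLieAut φ)
    (θ : {p : X × X // p.1 < p.2} → {p : X × X // p.1 < p.2})
    (σ : {p : X × X // p.1 < p.2} → K) (hσ : ∀ p, σ p ≠ 0)
    (hφθ : ∀ p : {p : X × X // p.1 < p.2},
      (φ (eE K p.1.1 p.1.2 p.2.le) : Matrix X X K) =
        σ p • Matrix.single (θ p).1.1 (θ p).1.2 (1 : K))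
    (x y z : X) (hxy : x < y) (hyz : y < z) :
    (Matrix.single (θ ⟨(x, z), hxy.trans hyz⟩).1.1 (θ ⟨(x, z), hxy.trans hyz⟩).1.2
          (1 : K) =
        Matrix.single (θ ⟨(x, y), hxy⟩).1.1 (θ ⟨(x, y), hxy⟩).1.2 (1 : K) *
          Matrix.single (θ ⟨(y, z), hyz⟩).1.1 (θ ⟨(y, z), hyz⟩).1.2 (1 : K) ∧
        σ ⟨(x, z), hxy.trans hyz⟩ = σ ⟨(x, y), hxy⟩ * σ ⟨(y, z), hyz⟩) ∨
    (Matrix.single (θ ⟨(x, z), hxy.trans hyz⟩).1.1 (θ ⟨(x, z), hxy.trans hyz⟩).1.2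
          (1 : K) =
        Matrix.single (θ ⟨(y, z), hyz⟩).1.1 (θ ⟨(y, z), hyz⟩).1.2 (1 : K) *
          Matrix.single (θ ⟨(x, y), hxy⟩).1.1 (θ ⟨(x, y), hxy⟩).1.2 (1 : K) ∧
        σ ⟨(x, z), hxy.trans hyz⟩ = -(σ ⟨(x, y), hxy⟩ * σ ⟨(y, z), hyz⟩)) := by
  have hxz := hxy.trans hyz
  have key : (φ (eE K x z hxz.le) : Matrix X X K) =
      (φ (eE K x y hxy.le) : Matrix X X K) * (φ (eE K y z hyz.le) : Matrix X X K) -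
        (φ (eE K y z hyz.le) : Matrix X X K) * (φ (eE K x y hxy.le) : Matrix X X K) := by
    rw [← eE_mul_eE_sub_eE_mul_eE K hxy.le hyz.le hxz.ne', hφ]
    rfl
  rw [hφθ ⟨(x, z), hxz⟩, hφθ ⟨(x, y), hxy⟩, hφθ ⟨(y, z), hyz⟩] at key
  exact smul_single_eq_commutator (θ _).2 (θ _).2 (hσ _) key
end

section
/- Let φ be an elementary Lie automorphism of I(X,K) with φ(e_{xy}) = σ(x,y)·e_{uv} where θ(e_{xy}) = e_{uv}. Then for every z ∈ X: φ(e_z)(v,v) − φ(e_z)(u,u) equals −1 if z = x, equals 1 if z = y, and equals 0 otherwise. -/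
set_option maxHeartbeats 1000000
set_option synthInstance.maxHeartbeats 400000

open Matrix

variable (K X : Type*) [Field K] [Fintype X] [PartialOrder X] [DecidableEq X]

/-!
In `I(X,K)`, `[e_z, e_{xy}] = (δ_{zx} - δ_{zy}) e_{xy}`. Applying the Lie automorphism `φ` gives
`[φ(e_z), σ e_{uv}] = (δ_{zx} - δ_{zy}) σ e_{uv}`, and the `(u,v)` entry of the left side is
`σ (φ(e_z)(u,u) - φ(e_z)(v,v))`; cancelling `σ` yields the claim.
-/

namespace Matrix

variable {n α : Type*} [Fintype n] [DecidableEq n]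

theorem single_diag_commutator_single [Ring α] (z x y : n) :
    single z z (1 : α) * single x y 1 - single x y 1 * single z z 1 =
      ((if z = x then 1 else 0) - (if z = y then 1 else 0) : α) • single x y 1 := by
  by_cases hzx : z = x <;> by_cases hzy : z = y <;> subst_vars <;> simp [*, Ne.symm]

theorem commutator_smul_single_apply [CommRing α] (D : Matrix n n α) (u v : n) (σ : α) :
    (D * (σ • single u v 1) - σ • single u v 1 * D : Matrix n n α) u v =
      σ * (D u u - D v v) := by
  simp [mul_sub, mul_comm]

theorem diag_sub_eq_neg_of_commutator_smul_single {K : Type*} [Field K] {D : Matrix n n K}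
    {u v : n} {σ c : K} (hσ : σ ≠ 0)
    (hD : D * (σ • single u v 1) - σ • single u v 1 * D = c • σ • single u v 1) :
    D v v - D u u = -c := by
  have huv := congrFun (congrFun hD u) v
  rw [commutator_smul_single_apply] at huv
  simp only [smul_apply, single_apply_same, smul_eq_mul, mul_one] at huv
  have : σ * (D v v - D u u) = σ * -c := by linear_combination -huv
  exact mul_left_cancel₀ hσ this

end Matrix

theorem eE_diag_commutator_eE {K X : Type*} [Field K] [Fintype X] [PartialOrder X]
    [DecidableEq X] (z x y : X) (hxy : x ≤ y) :
    eE K z z le_rfl * eE K x y hxy - eE K x y hxy * eE K z z le_rfl =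
      ((if z = x then 1 else 0) - (if z = y then 1 else 0) : K) • eE K x y hxy :=
  Subtype.ext (single_diag_commutator_single z x y)

theorem stmt18 (φ : IncAlg K X ≃ₗ[K] IncAlg K X) (hφ : IsLieAut φ)
    (x y u v : X) (hxy : x < y) (σ : K) (hσ : σ ≠ 0)
    (h : (φ (eE K x y hxy.le) : Matrix X X K) = σ • Matrix.single u v (1 : K))
    (z : X) :
    (φ (eE K z z le_rfl) : Matrix X X K) v v - (φ (eE K z z le_rfl) : Matrix X X K) u u =
      if z = x then -1 else if z = y then 1 else 0 := by
  have hcomm := congrArg Subtype.val (hφ (eE K z z le_rfl) (eE K x y hxy.le))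
  rw [eE_diag_commutator_eE, map_smul] at hcomm
  simp only [SetLike.val_smul, Subalgebra.coe_sub, Subalgebra.coe_mul, h] at hcomm
  rw [diag_sub_eq_neg_of_commutator_smul_single hσ hcomm.symm]
  by_cases hzx : z = x
  · simp [hzx, hxy.ne]
  · by_cases hzy : z = y
    · simp [hzy, hxy.ne']
    · simp [hzx, hzy]
end
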